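/- The Monna map ρ : ℚ_p → ℝ_{≥0}, sending Σ_{i≥γ} x_i p^i to Σ_{i≥γ} x_i p^{−i−1}, satisfies the Hölder-type inequality |ρ(x) − ρ(y)| ≤ |x−y|_p for all x, y ∈ ℚ_p. -/

import Mathlib

open scoped Classical
open MeasureTheory

noncomputable instance (p : ℕ) [Fact p.Prime] : MeasurableSpace ℚ_[p] := borel _

/-- The unit part of a nonzero `p`-adic number: `x * p^(-v_p(x))`, a `p`-adic unit. -/
noncomputable def padicUnitPart (p : ℕ) [Fact p.Prime] (x : ℚ_[p]) : ℤ_[p] :=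
  if hx : x = 0 then 0
  else ⟨x * (p : ℚ_[p]) ^ (-x.valuation), by
    have hp : (1 : ℝ) < p := Nat.one_lt_cast.mpr (Fact.out (p := p.Prime)).one_lt
    rw [norm_mul, Padic.norm_eq_zpow_neg_valuation hx, Padic.norm_p_zpow, neg_neg,
      ← zpow_add₀ (by positivity : (p : ℝ) ≠ 0)]
    simp⟩

/-- The `i`-th digit of the `p`-adic expansion `x = ∑ x_i p^i`. -/
noncomputable def padicDigit (p : ℕ) [Fact p.Prime] (x : ℚ_[p]) (i : ℤ) : ℕ :=
  if x = 0 then 0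
  else if x.valuation ≤ i then
    ((padicUnitPart p x).appr ((i - x.valuation).toNat + 1)
      - (padicUnitPart p x).appr (i - x.valuation).toNat) / p ^ (i - x.valuation).toNat
  else 0

/-- The `p`-adic fractional part `{x}_p = ∑_{i<0} x_i p^i`, a rational number. -/
noncomputable def padicFract (p : ℕ) [Fact p.Prime] (x : ℚ_[p]) : ℚ :=
  ∑ i ∈ Finset.Ico x.valuation 0, (padicDigit p x i : ℚ) * (p : ℚ) ^ i

/-- `x` is the canonical representative of its coset in `ℚ_p/ℤ_p`. -/
def IsPadicRep (p : ℕ) [Fact p.Prime] (n : ℚ_[p]) : Prop :=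
  ((padicFract p n : ℚ) : ℚ_[p]) = n

/-- The standard additive character `χ(x) = exp(2πi {x}_p)` on `ℚ_p`. -/
noncomputable def padicChar (p : ℕ) [Fact p.Prime] (x : ℚ_[p]) : ℂ :=
  Complex.exp (2 * Real.pi * Complex.I * ((padicFract p x : ℚ) : ℂ))

/-- The Monna map `ρ : ℚ_p → [0,∞)`, `∑ x_i p^i ↦ ∑ x_i p^(-i-1)`. -/
noncomputable def monna (p : ℕ) [Fact p.Prime] (x : ℚ_[p]) : ℝ :=
  ∑' i : ℤ, (padicDigit p x i : ℝ) * (p : ℝ) ^ (-i - 1)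

/-- The basic `p`-adic wavelet `ψ(x) = χ(p⁻¹ x) Ω(|x|_p)`. -/
noncomputable def padicPsi (p : ℕ) [Fact p.Prime] (x : ℚ_[p]) : ℂ :=
  if ‖x‖ ≤ 1 then padicChar p ((p : ℚ_[p])⁻¹ * x) else 0

/-- The `p`-adic wavelet `ψ_{γ,n,j}`. -/
noncomputable def padicWavelet (p : ℕ) [Fact p.Prime] (γ : ℤ) (n : ℚ_[p]) (j : ℕ)
    (x : ℚ_[p]) : ℂ :=
  if ‖(p : ℚ_[p]) ^ γ * x - n‖ ≤ 1 then
    (((p : ℝ) ^ (-(γ : ℝ) / 2) : ℝ) : ℂ) *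
      padicChar p ((p : ℚ_[p]) ^ (γ - 1) * (j : ℚ_[p]) * (x - (p : ℚ_[p]) ^ (-γ) * n))
  else 0

/-- Translation-dilation `ψ^{a,b}(x) = |a|_p^{-1/2} ψ((x-b)/a)` of the wavelet `ψ`. -/
noncomputable def padicPsiTransDil (p : ℕ) [Fact p.Prime] (a b : ℚ_[p]) (x : ℚ_[p]) : ℂ :=
  ((‖a‖ ^ (-(1 : ℝ) / 2) : ℝ) : ℂ) * padicPsi p ((x - b) / a)


/-!
If `‖x - y‖ = p^(-m)`, then `x ≡ y` modulo `p^m`, so the digits `x_i` and `y_i` coincide for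
`i < m`. The remaining digits differ by at most `p - 1`, and `∑_{i ≥ m} (p - 1) p^(-i-1) = p^(-m)`.
-/

open Set

section DigitExpansion

lemma hasSum_indicator_Ici_zpow {q : ℝ} (hq : 1 < q) (m : ℤ) :
    HasSum ((Ici m).indicator fun i : ℤ => (q - 1) * q ^ (-i - 1)) (q ^ (-m)) := by
  have hq0 : q ≠ 0 := by positivity
  have hq1 : q - 1 ≠ 0 := by linarith
  have hinj : Function.Injective fun k : ℕ => m + k := fun a b h => by simpa using h
  rw [← hinj.hasSum_iff fun i hi => indicator_of_notMem
    (fun hmi => hi ⟨(i - m).toNat, by simp [mem_Ici.mp hmi]⟩) _]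
  have hterm : ∀ k : ℕ, (Ici m).indicator (fun i : ℤ => (q - 1) * q ^ (-i - 1)) (m + k)
      = (q - 1) * q ^ (-m - 1) * q⁻¹ ^ k := by
    intro k
    rw [indicator_of_mem (by simp), mul_assoc, inv_pow, ← zpow_natCast, ← zpow_neg,
      ← zpow_add₀ hq0]
    ring_nf
  have hsum : (q - 1) * q ^ (-m - 1) * (1 - q⁻¹)⁻¹ = q ^ (-m) := by
    rw [zpow_sub₀ hq0, zpow_one]
    field_simp
  simpa only [Function.comp_def, hterm, hsum] using
    (hasSum_geometric_of_lt_one (by positivity) (inv_lt_one_of_one_lt₀ hq)).mul_left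
      ((q - 1) * q ^ (-m - 1))

variable {p : ℕ}

lemma norm_digit_sub_mul_zpow_le {a b : ℕ} (ha : a < p) (hb : b < p) {i m : ℤ}
    (hab : i < m → a = b) :
    ‖((a : ℝ) - b) * (p : ℝ) ^ (-i - 1)‖
      ≤ (Ici m).indicator (fun i : ℤ => ((p : ℝ) - 1) * (p : ℝ) ^ (-i - 1)) i := by
  have ha' : (a : ℝ) + 1 ≤ p := by exact_mod_cast ha
  have hb' : (b : ℝ) + 1 ≤ p := by exact_mod_cast hb
  have ha0 : (0 : ℝ) ≤ a := a.cast_nonneg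
  have hb0 : (0 : ℝ) ≤ b := b.cast_nonneg
  by_cases hmi : m ≤ i
  · rw [indicator_of_mem (mem_Ici.mpr hmi), norm_mul, Real.norm_eq_abs, norm_zpow,
      Real.norm_natCast]
    gcongr
    exact abs_sub_le_iff.mpr ⟨by linarith, by linarith⟩
  · rw [hab (not_le.mp hmi), sub_self, zero_mul, norm_zero]
    exact indicator_nonneg (fun j _ => mul_nonneg (by linarith) (by positivity)) i

lemma summable_digit_mul_zpow (hp : 1 < p) {a : ℤ → ℕ} (ha : ∀ i, a i < p)
    (hbdd : ∃ v, ∀ i < v, a i = 0) :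
    Summable fun i => (a i : ℝ) * (p : ℝ) ^ (-i - 1) := by
  obtain ⟨v, hv⟩ := hbdd
  refine (hasSum_indicator_Ici_zpow (q := p) (by exact_mod_cast hp) v).summable.of_norm_bounded
    fun i => ?_
  simpa using norm_digit_sub_mul_zpow_le (ha i) (b := 0) (by omega) (hv i)

theorem abs_tsum_digit_sub_le (hp : 1 < p) {a b : ℤ → ℕ} (ha : ∀ i, a i < p)
    (hb : ∀ i, b i < p) (ha_bdd : ∃ v, ∀ i < v, a i = 0) (hb_bdd : ∃ v, ∀ i < v, b i = 0)
    {m : ℤ} (hab : ∀ i < m, a i = b i) :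
    |∑' i, (a i : ℝ) * (p : ℝ) ^ (-i - 1) - ∑' i, (b i : ℝ) * (p : ℝ) ^ (-i - 1)|
      ≤ (p : ℝ) ^ (-m) := by
  rw [← (summable_digit_mul_zpow hp ha ha_bdd).tsum_sub (summable_digit_mul_zpow hp hb hb_bdd),
    ← Real.norm_eq_abs]
  refine tsum_of_norm_bounded (hasSum_indicator_Ici_zpow (q := p) (by exact_mod_cast hp) m)
    fun i => ?_
  rw [← sub_mul]
  exact norm_digit_sub_mul_zpow_le (ha i) (hb i) (hab i)

end DigitExpansion

lemma PadicInt.appr_eq_of_norm_sub_le {p : ℕ} [Fact p.Prime] {u w : ℤ_[p]} {n : ℕ}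
    (h : ‖u - w‖ ≤ (p : ℝ) ^ (-n : ℤ)) : u.appr n = w.appr n := by
  rw [PadicInt.norm_le_pow_iff_mem_span_pow, ← PadicInt.ker_toZModPow,
    RingHom.sub_mem_ker_iff] at h
  have hmod := (ZMod.natCast_eq_natCast_iff' _ _ _).mp h
  rwa [Nat.mod_eq_of_lt (u.appr_lt n), Nat.mod_eq_of_lt (w.appr_lt n)] at hmod

section PadicDigit

variable {p : ℕ} [Fact p.Prime]

lemma padicDigit_lt (x : ℚ_[p]) (i : ℤ) : padicDigit p x i < p := by
  have hp := (Fact.out : p.Prime).pos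
  unfold padicDigit
  split_ifs
  · exact hp
  · rw [Nat.div_lt_iff_lt_mul (pow_pos hp _), ← pow_succ']
    exact (Nat.sub_le _ _).trans_lt (PadicInt.appr_lt _ _)
  · exact hp

lemma padicDigit_eq_zero {x : ℚ_[p]} {i : ℤ} (h : x = 0 ∨ i < x.valuation) :
    padicDigit p x i = 0 := by
  rcases h with rfl | h
  · simp [padicDigit]
  · simp [padicDigit, not_le.mpr h]

lemma Padic.valuation_eq_of_norm_sub_lt {x y : ℚ_[p]} (hx : x ≠ 0) (h : ‖x - y‖ < ‖x‖) :
    y ≠ 0 ∧ y.valuation = x.valuation := by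
  have hxy := Padic.norm_eq_of_norm_sub_lt_left h
  have hy : y ≠ 0 := norm_ne_zero_iff.mp (hxy ▸ norm_ne_zero_iff.mpr hx)
  have hp : (1 : ℝ) < p := by exact_mod_cast (Fact.out : p.Prime).one_lt
  rw [Padic.norm_eq_zpow_neg_valuation hx, Padic.norm_eq_zpow_neg_valuation hy,
    zpow_right_inj₀ (by positivity) hp.ne', neg_inj] at hxy
  exact ⟨hy, hxy.symm⟩

lemma coe_padicUnitPart {x : ℚ_[p]} (hx : x ≠ 0) :
    (padicUnitPart p x : ℚ_[p]) = x * (p : ℚ_[p]) ^ (-x.valuation) := by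
  simp [padicUnitPart, hx]

lemma norm_padicUnitPart_sub {x y : ℚ_[p]} (hx : x ≠ 0) (hy : y ≠ 0)
    (hv : y.valuation = x.valuation) :
    ‖padicUnitPart p x - padicUnitPart p y‖ = ‖x - y‖ * (p : ℝ) ^ x.valuation := by
  rw [PadicInt.norm_def, PadicInt.coe_sub, coe_padicUnitPart hx, coe_padicUnitPart hy, hv, ← sub_mul, norm_mul, Padic.norm_p_zpow,
    neg_neg]

lemma padicDigit_eq_of_valuation_le {x y : ℚ_[p]} {i m : ℤ} (hx : x ≠ 0)
    (hvi : x.valuation ≤ i) (him : i < m) (h : ‖x - y‖ ≤ (p : ℝ) ^ (-m)) :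
    padicDigit p x i = padicDigit p y i := by
  have hp : (1 : ℝ) < p := by exact_mod_cast (Fact.out : p.Prime).one_lt
  set v := x.valuation
  obtain ⟨hy, hvy⟩ := Padic.valuation_eq_of_norm_sub_lt hx <| h.trans_lt <| by
    rw [Padic.norm_eq_zpow_neg_valuation hx]
    exact zpow_lt_zpow_right₀ hp (by omega)
  have happr : ∀ n : ℕ, (n : ℤ) ≤ m - v →
      (padicUnitPart p x).appr n = (padicUnitPart p y).appr n := by
    intro n hn
    refine PadicInt.appr_eq_of_norm_sub_le ?_
    calc ‖padicUnitPart p x - padicUnitPart p y‖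
        = ‖x - y‖ * (p : ℝ) ^ v := norm_padicUnitPart_sub hx hy hvy
      _ ≤ (p : ℝ) ^ (-m) * (p : ℝ) ^ v := by gcongr
      _ = (p : ℝ) ^ (-(m - v)) := by rw [← zpow_add₀ (by positivity)]; ring_nf
      _ ≤ (p : ℝ) ^ (-n : ℤ) := zpow_le_zpow_right₀ hp.le (by omega)
  unfold padicDigit
  rw [if_neg hx, if_neg hy, if_pos hvi, hvy, if_pos hvi,
    happr _ (by omega), happr _ (by omega)]

lemma padicDigit_eq_of_norm_sub_le {x y : ℚ_[p]} {i m : ℤ} (him : i < m)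
    (h : ‖x - y‖ ≤ (p : ℝ) ^ (-m)) : padicDigit p x i = padicDigit p y i := by
  by_cases hx : x = 0 ∨ i < x.valuation
  · by_cases hy : y = 0 ∨ i < y.valuation
    · rw [padicDigit_eq_zero hx, padicDigit_eq_zero hy]
    · push Not at hy
      exact (padicDigit_eq_of_valuation_le hy.1 hy.2 him (by rwa [norm_sub_rev])).symm
  · push Not at hx
    exact padicDigit_eq_of_valuation_le hx.1 hx.2 him h

end PadicDigit

/-- the Monna map satisfies the Hölder inequality `|ρ(x)-ρ(y)| ≤ |x-y|_p`. -/
theorem monna_holder (p : ℕ) [Fact p.Prime] (x y : ℚ_[p]) :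
    |monna p x - monna p y| ≤ ‖x - y‖ := by
  rcases eq_or_ne x y with rfl | hxy
  · simp
  have hnorm := Padic.norm_eq_zpow_neg_valuation (sub_ne_zero.mpr hxy)
  have hbdd (z : ℚ_[p]) : ∃ v, ∀ i < v, padicDigit p z i = 0 :=
    ⟨z.valuation, fun _ hi => padicDigit_eq_zero (Or.inr hi)⟩
  rw [hnorm]
  exact abs_tsum_digit_sub_le (Fact.out : p.Prime).one_lt (padicDigit_lt x) (padicDigit_lt y)
    (hbdd x) (hbdd y) fun i hi => padicDigit_eq_of_norm_sub_le hi hnorm.le
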